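/- arXiv:2410.08127 — 5 statements merged into one kernel-verified Lean document; each statement's English description precedes it below -/
import Mathlib

section
/- Under the same hypotheses (P_lL + P_hL = 1, P_lH + P_hH = 1, Δ := P_lL - P_lH > 0, and 1/(Δ+1) < α ≤ 1), we have P_lL/(P_lL + P_hH) > α·P_lH + (1-α) and α·P_hL + (1-α) < P_hH/(P_lL + P_hH). -/
theorem stmt_2 (PlL PlH PhL PhH α : ℝ)
    (hlL : PlL ∈ Set.Icc (0:ℝ) 1) (hlH : PlH ∈ Set.Icc (0:ℝ) 1)
    (hhL : PhL ∈ Set.Icc (0:ℝ) 1) (hhH : PhH ∈ Set.Icc (0:ℝ) 1)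
    (hsumL : PlL + PhL = 1) (hsumH : PlH + PhH = 1)
    (hΔ : 0 < PlL - PlH)
    (hα1 : 1 / (PlL - PlH + 1) < α) (hα2 : α ≤ 1) :
    PlL / (PlL + PhH) > α * PlH + (1 - α) ∧
    α * PhL + (1 - α) < PhH / (PlL + PhH) := by
  obtain ⟨h1, h2⟩ := hlL
  obtain ⟨h3, h4⟩ := hlH
  have hD : (0:ℝ) < PlL - PlH + 1 := by linarith
  have hD' : PlL + PhH = PlL - PlH + 1 := by linarith
  have hα1' : 1 < α * (PlL - PlH + 1) := (div_lt_iff₀ hD).mp hα1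
  have hPhH : 0 < PhH := by nlinarith
  have hPlL : 0 < PlL := by linarith
  constructor
  · rw [gt_iff_lt, lt_div_iff₀ (by linarith : (0:ℝ) < PlL + PhH), hD']
    nlinarith
  · rw [lt_div_iff₀ (by linarith : (0:ℝ) < PlL + PhH), hD']
    nlinarith
end

section
/- With p_A^H(δ_l,δ_h) = 1/2 + P_hH·δ_h - P_lH·δ_l and p_R^L(δ_l,δ_h) = 1/2 + P_lL·δ_l - P_hL·δ_h, suppose P_hL + P_hH ≤ 1. Then the pair (δ_l*, δ_h*) = ((P_hL+P_hH)/(2(P_lL+P_lH)), 1/2) satisfies p_A^H(δ_l*,δ_h*) = p_R^L(δ_l*,δ_h*) = P_lL/(P_lL+P_lH), and for every (δ_l, δ_h) ∈ [0,1/2]², min{p_A^H(δ_l,δ_h), p_R^L(δ_l,δ_h)} ≤ P_lL/(P_lL+P_lH). -/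
theorem stmt_5 (PlL PlH PhL PhH : ℝ)
    (hlL : PlL ∈ Set.Icc (0:ℝ) 1) (hlH : PlH ∈ Set.Icc (0:ℝ) 1)
    (hhL : PhL ∈ Set.Icc (0:ℝ) 1) (hhH : PhH ∈ Set.Icc (0:ℝ) 1)
    (hsumL : PlL + PhL = 1) (hsumH : PlH + PhH = 1)
    (hΔ : 0 < PlL - PlH)
    (pAH : ℝ → ℝ → ℝ) (pRL : ℝ → ℝ → ℝ)
    (hpAH : ∀ δl δh, pAH δl δh = 1/2 + PhH * δh - PlH * δl)
    (hpRL : ∀ δl δh, pRL δl δh = 1/2 + PlL * δl - PhL * δh)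
    (hcase : PhL + PhH ≤ 1) :
    pAH ((PhL + PhH) / (2 * (PlL + PlH))) (1/2) = PlL / (PlL + PlH) ∧
    pRL ((PhL + PhH) / (2 * (PlL + PlH))) (1/2) = PlL / (PlL + PlH) ∧
    ∀ δl ∈ Set.Icc (0:ℝ) (1/2), ∀ δh ∈ Set.Icc (0:ℝ) (1/2),
      min (pAH δl δh) (pRL δl δh) ≤ PlL / (PlL + PlH) := by
  have hS : 0 < PlL + PlH := by
    have := hlH.1; linarith
  have hPhH : PhH = 1 - PlH := by linarith
  have hPhL : PhL = 1 - PlL := by linarith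
  refine ⟨?_, ?_, ?_⟩
  · rw [hpAH, hPhH, hPhL]; field_simp; ring
  · rw [hpRL, hPhH, hPhL]; field_simp; ring
  · intro δl hδl δh hδh
    rw [hpAH, hpRL]
    obtain ⟨a, ha⟩ : ∃ a, a = 1/2 + PhH * δh - PlH * δl := ⟨_, rfl⟩
    obtain ⟨b, hb⟩ : ∃ b, b = 1/2 + PlL * δl - PhL * δh := ⟨_, rfl⟩
    rw [← ha, ← hb]
    have key : PlL * a + PlH * b ≤ PlL := by
      have h1 : PlL * a + PlH * b = (PlL + PlH)/2 + (PlL - PlH) * δh := by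
        rw [ha, hb, hPhH, hPhL]; ring
      nlinarith [mul_nonneg (by linarith [hδh.2] : (0:ℝ) ≤ 1/2 - δh) hΔ.le]
    rcases le_total a b with h | h
    · rw [min_eq_left h]
      rw [le_div_iff₀ hS]
      nlinarith [key, mul_nonneg hlH.1 (sub_nonneg.mpr h)]
    · rw [min_eq_right h]
      rw [le_div_iff₀ hS]
      nlinarith [key, mul_nonneg hlL.1 (sub_nonneg.mpr h)]
end

section
/- With p_A^H and p_R^L as above, suppose P_hL + P_hH > 1. Then (δ_l*, δ_h*) = (1/2, (P_lL+P_lH)/(2(P_hL+P_hH))) satisfies p_A^H(δ_l*,δ_h*) = p_R^L(δ_l*,δ_h*) = P_hH/(P_hL+P_hH), and for every (δ_l, δ_h) ∈ [0,1/2]², min{p_A^H(δ_l,δ_h), p_R^L(δ_l,δ_h)} ≤ P_hH/(P_hL+P_hH). -/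
theorem stmt_6 (PlL PlH PhL PhH : ℝ)
    (hlL : PlL ∈ Set.Icc (0:ℝ) 1) (hlH : PlH ∈ Set.Icc (0:ℝ) 1)
    (hhL : PhL ∈ Set.Icc (0:ℝ) 1) (hhH : PhH ∈ Set.Icc (0:ℝ) 1)
    (hsumL : PlL + PhL = 1) (hsumH : PlH + PhH = 1)
    (hΔ : 0 < PlL - PlH)
    (pAH : ℝ → ℝ → ℝ) (pRL : ℝ → ℝ → ℝ)
    (hpAH : ∀ δl δh, pAH δl δh = 1/2 + PhH * δh - PlH * δl)
    (hpRL : ∀ δl δh, pRL δl δh = 1/2 + PlL * δl - PhL * δh)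
    (hcase : 1 < PhL + PhH) :
    pAH (1/2) ((PlL + PlH) / (2 * (PhL + PhH))) = PhH / (PhL + PhH) ∧
    pRL (1/2) ((PlL + PlH) / (2 * (PhL + PhH))) = PhH / (PhL + PhH) ∧
    ∀ δl ∈ Set.Icc (0:ℝ) (1/2), ∀ δh ∈ Set.Icc (0:ℝ) (1/2),
      min (pAH δl δh) (pRL δl δh) ≤ PhH / (PhL + PhH) := by
  have hS : (0:ℝ) < PhL + PhH := by linarith
  have eL : PlL = 1 - PhL := by linarith
  have eH : PlH = 1 - PhH := by linarith
  subst eL eH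
  refine ⟨?_, ?_, ?_⟩
  · rw [hpAH]
    field_simp
    ring
  · rw [hpRL]
    field_simp
    ring
  · rintro δl ⟨hl0, hl1⟩ δh ⟨hh0, hh1⟩
    rw [le_div_iff₀ hS]
    rcases le_total (pAH δl δh) (pRL δl δh) with h | h
    · rw [min_eq_left h]
      rw [hpAH, hpRL] at *
      nlinarith [mul_nonneg hhH.1 (sub_nonneg.2 h), mul_nonneg (by linarith : (0:ℝ) ≤ 1/2 - δl) (by linarith : (0:ℝ) ≤ PhH - PhL)]
    · rw [min_eq_right h]
      rw [hpAH, hpRL] at *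
      nlinarith [mul_nonneg hhL.1 (sub_nonneg.2 h), mul_nonneg (by linarith : (0:ℝ) ≤ 1/2 - δl) (by linarith : (0:ℝ) ≤ PhH - PhL)]
end

section
/- Let P_lL + P_hL = 1, P_lH + P_hH = 1, Δ := P_lL - P_lH > 0, and define M = P_lL/(P_lL+P_lH) if P_hL + P_hH ≤ 1 and M = P_hH/(P_hL+P_hH) otherwise. Then 2M ≤ Δ + 1, with equality if and only if P_hL + P_hH = 1. -/
theorem stmt_7 (PlL PlH PhL PhH : ℝ)
    (hlL : PlL ∈ Set.Icc (0:ℝ) 1) (hlH : PlH ∈ Set.Icc (0:ℝ) 1)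
    (hhL : PhL ∈ Set.Icc (0:ℝ) 1) (hhH : PhH ∈ Set.Icc (0:ℝ) 1)
    (hsumL : PlL + PhL = 1) (hsumH : PlH + PhH = 1)
    (hΔ : 0 < PlL - PlH)
    (M : ℝ)
    (hM : M = if PhL + PhH ≤ 1 then PlL / (PlL + PlH) else PhH / (PhL + PhH)) :
    2 * M ≤ (PlL - PlH) + 1 ∧ (2 * M = (PlL - PlH) + 1 ↔ PhL + PhH = 1) := by
  obtain ⟨ha0, ha1⟩ := hlL
  obtain ⟨hb0, hb1⟩ := hlH
  subst hM
  split_ifs with h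
  · -- PhL + PhH ≤ 1, i.e., PlL + PlH ≥ 1 > 0
    have hs : (1:ℝ) ≤ PlL + PlH := by linarith
    have hspos : (0:ℝ) < PlL + PlH := by linarith
    have hkey : 2 * (PlL / (PlL + PlH)) = (2 * PlL) / (PlL + PlH) := by ring
    constructor
    · rw [hkey, div_le_iff₀ hspos]; nlinarith
    · rw [hkey, div_eq_iff (ne_of_gt hspos)]
      constructor
      · intro he
        have : (PlL - PlH) * (PlL + PlH - 1) = 0 := by nlinarith
        rcases mul_eq_zero.1 this with h' | h' <;> linarith
      · intro he
        have : PlL + PlH = 1 := by linarith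
        rw [this]; ring_nf; linarith
  · -- PhL + PhH > 1, i.e., PlL + PlH < 1
    push_neg at h
    have hs : PlL + PlH < 1 := by linarith
    have hspos : (0:ℝ) < PhL + PhH := by linarith
    have hkey : 2 * (PhH / (PhL + PhH)) = (2 * PhH) / (PhL + PhH) := by ring
    have hstrict : 2 * (PhH / (PhL + PhH)) < (PlL - PlH) + 1 := by
      rw [hkey, div_lt_iff₀ hspos]; nlinarith
    exact ⟨le_of_lt hstrict, fun he => by linarith, fun he => by linarith⟩
end

section
/- In the setting above, additionally suppose 1 ≤ Δv^ω ≤ B for all agents and states, and suppose μ·(λ^H_A(Σ') - λ^H_A(Σ)) ≤ ε₀ with λ^H_A(Σ') - λ^H_A(Σ) ≥ 0 and λ^L_A(Σ') - λ^L_A(Σ) ≥ 0. If the type-H agent's utility does not decrease (Δu_i ≥ 0), then (1-μ)(λ^L_A(Σ') - λ^L_A(Σ))·Δv_i^L ≤ B·ε₀, and consequently the type-L agent's utility gain satisfies Δu_j ≤ B²·ε₀. -/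
theorem stmt_19 (μ B ε₀ : ℝ) (hμ : μ ∈ Set.Ioo (0:ℝ) 1)
    (lamH lamH' lamL lamL' : ℝ)
    (hlamH : lamH ∈ Set.Icc (0:ℝ) 1) (hlamH' : lamH' ∈ Set.Icc (0:ℝ) 1)
    (hlamL : lamL ∈ Set.Icc (0:ℝ) 1) (hlamL' : lamL' ∈ Set.Icc (0:ℝ) 1)
    (ΔviH ΔviL ΔvjH ΔvjL : ℝ)
    (hviH : ΔviH ∈ Set.Icc (1:ℝ) B) (hviL : ΔviL ∈ Set.Icc (1:ℝ) B)
    (hvjH : ΔvjH ∈ Set.Icc (1:ℝ) B) (hvjL : ΔvjL ∈ Set.Icc (1:ℝ) B)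
    (hε₀ : μ * (lamH' - lamH) ≤ ε₀)
    (hHpos : 0 ≤ lamH' - lamH) (hLpos : 0 ≤ lamL' - lamL)
    (Δui Δuj : ℝ)
    (hΔui : Δui = μ * (lamH' - lamH) * ΔviH - (1 - μ) * (lamL' - lamL) * ΔviL)
    (hΔuj : Δuj = (1 - μ) * (lamL' - lamL) * ΔvjL - μ * (lamH' - lamH) * ΔvjH)
    (hui : 0 ≤ Δui) :
    (1 - μ) * (lamL' - lamL) * ΔviL ≤ B * ε₀ ∧ Δuj ≤ B^2 * ε₀ := by
  obtain ⟨hμ0, hμ1⟩ := hμ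
  obtain ⟨hviH1, hviHB⟩ := hviH
  obtain ⟨hviL1, hviLB⟩ := hviL
  obtain ⟨hvjL1, hvjLB⟩ := hvjL
  obtain ⟨hvjH1, hvjHB⟩ := hvjH
  have hμH : 0 ≤ μ * (lamH' - lamH) := mul_nonneg hμ0.le hHpos
  have hε0 : 0 ≤ ε₀ := le_trans hμH hε₀
  have hμL : 0 ≤ (1 - μ) * (lamL' - lamL) := mul_nonneg (by linarith) hLpos
  have h1 : (1 - μ) * (lamL' - lamL) * ΔviL ≤ B * ε₀ := by
    have : μ * (lamH' - lamH) * ΔviH ≤ B * ε₀ := by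
      calc μ * (lamH' - lamH) * ΔviH ≤ μ * (lamH' - lamH) * B := by
            exact mul_le_mul_of_nonneg_left hviHB hμH
        _ = B * (μ * (lamH' - lamH)) := by ring
        _ ≤ B * ε₀ := by
            have hB : 1 ≤ B := le_trans hviH1 hviHB
            exact mul_le_mul_of_nonneg_left hε₀ (by linarith)
    linarith [hΔui ▸ hui]
  refine ⟨h1, ?_⟩
  have hB : 1 ≤ B := le_trans hviH1 hviHB
  have h2 : (1 - μ) * (lamL' - lamL) ≤ B * ε₀ := by
    calc (1 - μ) * (lamL' - lamL) = (1 - μ) * (lamL' - lamL) * 1 := by ring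
      _ ≤ (1 - μ) * (lamL' - lamL) * ΔviL := mul_le_mul_of_nonneg_left hviL1 hμL
      _ ≤ B * ε₀ := h1
  have h3 : (1 - μ) * (lamL' - lamL) * ΔvjL ≤ B * ε₀ * B := by
    calc (1 - μ) * (lamL' - lamL) * ΔvjL ≤ (1 - μ) * (lamL' - lamL) * B :=
          mul_le_mul_of_nonneg_left hvjLB hμL
      _ ≤ B * ε₀ * B := mul_le_mul_of_nonneg_right h2 (by linarith)
  have h4 : 0 ≤ μ * (lamH' - lamH) * ΔvjH := mul_nonneg hμH (by linarith)
  rw [hΔuj]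
  nlinarith [h3, h4]
end
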